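/- Consider the generic channel H = Σ_{ℓ=1}^L √p_ℓ e^{-jβ_ℓ} (a_f(τ_ℓ) ⊗ a_t(ν_ℓ) ⊗ a_R(θ_ℓ^R) ⊗ a_T(θ_ℓ^T)) with all four steering vectors of exponential form a_m = e^{-j c m κ} in their respective domains. If, conditioned on side information z and on the parameter collection Ξ = {p_ℓ, τ_ℓ, ν_ℓ, θ_ℓ^R, θ_ℓ^T}, the phases β_ℓ are mutually independent and uniform on [0,2π], then E[H | z] = 0 and E[H H^H | z] lies in the set T_{M_SC} ⊗ T_{M_SN} ⊗ T_{M_R} ⊗ T_{M_T}, i.e., it is a (four-fold Kronecker) sum of Kronecker products of Toeplitz matrices. -/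

import Mathlib

open MeasureTheory ProbabilityTheory

/-- The uniform probability measure on the interval `[0, 2π]`. -/
noncomputable def uniformIcc : Measure ℝ :=
  (ENNReal.ofReal (2 * Real.pi))⁻¹ • (volume.restrict (Set.Icc 0 (2 * Real.pi)))

/-!
Conditioned on `(z, Ξ)`, every entry of `H` is a random-phase sum `∑ ℓ, c_ℓ e^{-iβ_ℓ}` with
deterministic coefficients and independent uniform phases. Since `E[e^{-iβ}] = 0` and, by
independence, `E[e^{-iβ_ℓ} conj e^{-iβ_ℓ'}] = δ_{ℓℓ'}`, such a sum has conditional mean `0` and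
conditional covariance `∑ ℓ, c_ℓ(i) conj c_ℓ(j)`. For the channel,
`c_ℓ(i) conj c_ℓ(j) = p_ℓ e^{-i(φ_ℓ(i) - φ_ℓ(j))}` where the steering phase `φ_ℓ` is linear in
each of the four indices, so the covariance only sees the index differences. Both facts descend
from `σ(z, Ξ)` to `σ(z)` by the tower property.
-/

section RandomPhaseModel

open Complex ComplexConjugate

instance : IsProbabilityMeasure uniformIcc where
  measure_univ := by
    rw [uniformIcc, Measure.smul_apply, Measure.restrict_apply_univ, Real.volume_Icc, sub_zero,
      smul_eq_mul, ENNReal.inv_mul_cancel (by simp [Real.pi_pos]) ENNReal.ofReal_ne_top]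

theorem integral_cexp_neg_I_mul_uniformIcc : ∫ t : ℝ, cexp (-(I * t)) ∂uniformIcc = 0 := by
  have h : ∫ t in (0 : ℝ)..2 * Real.pi, cexp (-I * t) = 0 := by
    rw [integral_exp_mul_complex (neg_ne_zero.2 I_ne_zero)]
    push_cast
    rw [show -I * (2 * Real.pi) = -(2 * Real.pi * I) by ring, exp_neg, exp_two_pi_mul_I]
    simp
  rw [intervalIntegral.integral_of_le Real.two_pi_pos.le, ← integral_Icc_eq_integral_Ioc] at h
  simp_rw [uniformIcc, integral_smul_measure, neg_mul] at h ⊢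
  rw [h, smul_zero]

section RandomPhases

variable {ι : Type*} [Fintype ι]

theorem integrable_cexp_neg_I_mul_eval (ℓ : ι) :
    Integrable (fun y : ι → ℝ => cexp (-(I * y ℓ))) (Measure.pi fun _ => uniformIcc) :=
  .of_bound (Measurable.aestronglyMeasurable (by fun_prop)) 1
    (.of_forall fun y => by simp [norm_exp])

theorem integrable_cexp_neg_I_mul_eval_mul_conj (ℓ ℓ' : ι) :
    Integrable (fun y : ι → ℝ => cexp (-(I * y ℓ)) * conj (cexp (-(I * y ℓ'))))
      (Measure.pi fun _ => uniformIcc) :=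
  .of_bound (Measurable.aestronglyMeasurable (by fun_prop)) 1
    (.of_forall fun y => by simp [norm_exp])

theorem integral_cexp_neg_I_mul_eval (ℓ : ι) :
    ∫ y : ι → ℝ, cexp (-(I * y ℓ)) ∂Measure.pi (fun _ => uniformIcc) = 0 :=
  (integral_comp_eval (μ := fun _ => uniformIcc) (f := fun t : ℝ => cexp (-(I * t)))
    (by fun_prop)).trans integral_cexp_neg_I_mul_uniformIcc

theorem integral_cexp_neg_I_mul_eval_mul_conj [DecidableEq ι] (ℓ ℓ' : ι) :
    ∫ y : ι → ℝ, cexp (-(I * y ℓ)) * conj (cexp (-(I * y ℓ'))) ∂Measure.pi (fun _ => uniformIcc) =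
      if ℓ = ℓ' then 1 else 0 := by
  split_ifs with h
  · subst h
    simp [mul_conj, normSq_eq_norm_sq, norm_exp]
  · have hind : IndepFun (fun y : ι → ℝ => y ℓ) (fun y => y ℓ')
        (Measure.pi fun _ => uniformIcc) :=
      (iIndepFun_pi (X := fun _ => id) fun _ => aemeasurable_id).indepFun h
    have hind' : IndepFun (fun y : ι → ℝ => cexp (-(I * y ℓ))) (fun y => conj (cexp (-(I * y ℓ'))))
        (Measure.pi fun _ => uniformIcc) :=
      hind.comp (φ := fun t : ℝ => cexp (-(I * t))) (ψ := fun t : ℝ => conj (cexp (-(I * t))))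
        (by fun_prop) (by fun_prop)
    rw [hind'.integral_fun_mul_eq_mul_integral (Measurable.aestronglyMeasurable (by fun_prop))
      (Measurable.aestronglyMeasurable (by fun_prop))]
    simp [integral_cexp_neg_I_mul_eval]

noncomputable def phaseSum (c : ι → ℂ) (y : ι → ℝ) : ℂ := ∑ ℓ, c ℓ * cexp (-(I * y ℓ))

theorem continuous_phaseSum : Continuous fun q : (ι → ℂ) × (ι → ℝ) => phaseSum q.1 q.2 := by
  unfold phaseSum; fun_prop

theorem integral_phaseSum (c : ι → ℂ) :
    ∫ y, phaseSum c y ∂Measure.pi (fun _ => uniformIcc) = 0 := by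
  unfold phaseSum
  rw [integral_finsetSum _ fun ℓ _ => (integrable_cexp_neg_I_mul_eval ℓ).const_mul (c ℓ)]
  simp [integral_const_mul, integral_cexp_neg_I_mul_eval]

theorem phaseSum_mul_conj (c d : ι → ℂ) (y : ι → ℝ) :
    phaseSum c y * conj (phaseSum d y) =
      ∑ ℓ, ∑ ℓ', c ℓ * conj (d ℓ') * (cexp (-(I * y ℓ)) * conj (cexp (-(I * y ℓ')))) := by
  simp only [phaseSum, map_sum, map_mul, Finset.sum_mul_sum, mul_mul_mul_comm]

theorem integral_phaseSum_mul_conj (c d : ι → ℂ) :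
    ∫ y, phaseSum c y * conj (phaseSum d y) ∂Measure.pi (fun _ => uniformIcc) =
      ∑ ℓ, c ℓ * conj (d ℓ) := by
  classical
  simp_rw [phaseSum_mul_conj]
  rw [integral_finsetSum _ fun ℓ _ => integrable_finsetSum _ fun ℓ' _ =>
    (integrable_cexp_neg_I_mul_eval_mul_conj ℓ ℓ').const_mul _]
  refine Finset.sum_congr rfl fun ℓ _ => ?_
  rw [integral_finsetSum _ fun ℓ' _ => (integrable_cexp_neg_I_mul_eval_mul_conj ℓ ℓ').const_mul _]
  simp [integral_const_mul, integral_cexp_neg_I_mul_eval_mul_conj]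

end RandomPhases

theorem condExp_ae_eq_of_condExp_ae_eq_of_le {Ω F : Type*} [NormedAddCommGroup F]
    [NormedSpace ℝ F] [CompleteSpace F] {m m' m₀ : MeasurableSpace Ω} {μ : Measure Ω}
    {f g : Ω → F} (hm : m ≤ m') (hm' : m' ≤ m₀) [SigmaFinite (μ.trim hm')]
    (h : μ[f | m'] =ᵐ[μ] μ[g | m']) : μ[f | m] =ᵐ[μ] μ[g | m] :=
  (condExp_condExp_of_le hm hm').symm.trans
    ((condExp_congr_ae h).trans (condExp_condExp_of_le hm hm'))

section Conditioning

variable {Ω α ι : Type*} [Fintype ι] {mΩ : MeasurableSpace Ω} {mα : MeasurableSpace α}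
  {μ : Measure Ω} [IsFiniteMeasure μ] {X : Ω → α} {Y : Ω → ι → ℝ}

theorem measurable_phaseSum {C : α → ι → ℂ} (hC : Measurable C) :
    Measurable fun q : α × (ι → ℝ) => phaseSum (C q.1) q.2 :=
  continuous_phaseSum.measurable.comp ((hC.comp measurable_fst).prodMk measurable_snd)

theorem condExp_ae_eq_integral_of_condDistrib_ae_eq {β F : Type*} [MeasurableSpace β]
    [StandardBorelSpace β] [Nonempty β] [NormedAddCommGroup F] [NormedSpace ℝ F]
    [CompleteSpace F] {Y : Ω → β} {ν : Measure β} (hX : Measurable X) (hY : AEMeasurable Y μ)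
    (hν : ∀ᵐ ω ∂μ, condDistrib Y X μ (X ω) = ν) {f : α × β → F} (hf : StronglyMeasurable f)
    (hf_int : Integrable (fun ω => f (X ω, Y ω)) μ) :
    μ[fun ω => f (X ω, Y ω) | mα.comap X] =ᵐ[μ] fun ω => ∫ y, f (X ω, y) ∂ν := by
  filter_upwards [condExp_prod_ae_eq_integral_condDistrib hX hY hf hf_int, hν] with ω h hω
  rw [h, hω]

theorem condExp_phaseSum_ae_eq_zero (hX : Measurable X) (hY : AEMeasurable Y μ)
    (hXY : ∀ᵐ ω ∂μ, condDistrib Y X μ (X ω) = Measure.pi fun _ => uniformIcc)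
    {C : α → ι → ℂ} (hC : Measurable C)
    (hint : Integrable (fun ω => phaseSum (C (X ω)) (Y ω)) μ) :
    μ[fun ω => phaseSum (C (X ω)) (Y ω) | mα.comap X] =ᵐ[μ] 0 :=
  (condExp_ae_eq_integral_of_condDistrib_ae_eq hX hY hXY (f := fun q => phaseSum (C q.1) q.2)
    (measurable_phaseSum hC).stronglyMeasurable hint).trans
    (.of_forall fun ω => integral_phaseSum (C (X ω)))

theorem condExp_phaseSum_mul_conj_ae_eq (hX : Measurable X) (hY : AEMeasurable Y μ)
    (hXY : ∀ᵐ ω ∂μ, condDistrib Y X μ (X ω) = Measure.pi fun _ => uniformIcc)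
    {C D : α → ι → ℂ} (hC : Measurable C) (hD : Measurable D)
    (hint : Integrable (fun ω => phaseSum (C (X ω)) (Y ω) * conj (phaseSum (D (X ω)) (Y ω))) μ) :
    μ[fun ω => phaseSum (C (X ω)) (Y ω) * conj (phaseSum (D (X ω)) (Y ω)) | mα.comap X]
      =ᵐ[μ] fun ω => ∑ ℓ, C (X ω) ℓ * conj (D (X ω) ℓ) := by
  refine (condExp_ae_eq_integral_of_condDistrib_ae_eq hX hY hXY
    (f := fun q => phaseSum (C q.1) q.2 * conj (phaseSum (D q.1) q.2)) ?_ hint).trans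
    (.of_forall fun ω => integral_phaseSum_mul_conj (C (X ω)) (D (X ω)))
  exact ((measurable_phaseSum hC).mul
    (continuous_conj.measurable.comp (measurable_phaseSum hD))).stronglyMeasurable

end Conditioning

section Channel

open Real

variable {L MSC MSN MR MT : ℕ}

-- the path parameters `Ξ = (p, τ, ν, θ_R, θ_T)`
abbrev PathParams (L : ℕ) :=
  (Fin L → ℝ) × (Fin L → ℝ) × (Fin L → ℝ) × (Fin L → ℝ) × (Fin L → ℝ)

noncomputable def steeringPhase (Δf ΔT : ℝ) (i : Fin MSC × Fin MSN × Fin MR × Fin MT)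
    (x : PathParams L) (ℓ : Fin L) : ℝ :=
  2 * π * Δf * (i.1 : ℕ) * x.2.1 ℓ + 2 * π * ΔT * (i.2.1 : ℕ) * x.2.2.1 ℓ +
    π * (i.2.2.1 : ℕ) * Real.sin (x.2.2.2.1 ℓ) + π * (i.2.2.2 : ℕ) * Real.sin (x.2.2.2.2 ℓ)

noncomputable def pathGain (Δf ΔT : ℝ) (i : Fin MSC × Fin MSN × Fin MR × Fin MT)
    (x : PathParams L) (ℓ : Fin L) : ℂ :=
  √(x.1 ℓ) * cexp (-(I * steeringPhase Δf ΔT i x ℓ))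

theorem measurable_pathGain (Δf ΔT : ℝ) (i : Fin MSC × Fin MSN × Fin MR × Fin MT) :
    Measurable (pathGain (L := L) Δf ΔT i) := by
  unfold pathGain steeringPhase
  fun_prop

theorem steeringPhase_sub_steeringPhase {Δf ΔT : ℝ}
    {i j i' j' : Fin MSC × Fin MSN × Fin MR × Fin MT}
    (h₁ : ((i.1 : ℕ) : ℤ) - ((j.1 : ℕ) : ℤ) = ((i'.1 : ℕ) : ℤ) - ((j'.1 : ℕ) : ℤ))
    (h₂ : ((i.2.1 : ℕ) : ℤ) - ((j.2.1 : ℕ) : ℤ) = ((i'.2.1 : ℕ) : ℤ) - ((j'.2.1 : ℕ) : ℤ))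
    (h₃ : ((i.2.2.1 : ℕ) : ℤ) - ((j.2.2.1 : ℕ) : ℤ)
      = ((i'.2.2.1 : ℕ) : ℤ) - ((j'.2.2.1 : ℕ) : ℤ))
    (h₄ : ((i.2.2.2 : ℕ) : ℤ) - ((j.2.2.2 : ℕ) : ℤ)
      = ((i'.2.2.2 : ℕ) : ℤ) - ((j'.2.2.2 : ℕ) : ℤ))
    (x : PathParams L) (ℓ : Fin L) :
    steeringPhase Δf ΔT i x ℓ - steeringPhase Δf ΔT j x ℓ =
      steeringPhase Δf ΔT i' x ℓ - steeringPhase Δf ΔT j' x ℓ := by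
  unfold steeringPhase
  linear_combination (norm := (push_cast; ring))
    (2 * π * Δf * x.2.1 ℓ) * congrArg (Int.cast : ℤ → ℝ) h₁ +
    (2 * π * ΔT * x.2.2.1 ℓ) * congrArg (Int.cast : ℤ → ℝ) h₂ +
    (π * Real.sin (x.2.2.2.1 ℓ)) * congrArg (Int.cast : ℤ → ℝ) h₃ +
    (π * Real.sin (x.2.2.2.2 ℓ)) * congrArg (Int.cast : ℤ → ℝ) h₄

theorem cexp_neg_I_mul_mul_conj (a b : ℝ) :
    cexp (-(I * a)) * conj (cexp (-(I * b))) = cexp (-(I * ↑(a - b))) := by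
  rw [← exp_conj, ← Complex.exp_add]
  congr 1
  simp [conj_ofReal]
  ring

theorem pathGain_mul_conj (Δf ΔT : ℝ) (i j : Fin MSC × Fin MSN × Fin MR × Fin MT)
    (x : PathParams L) (ℓ : Fin L) :
    pathGain Δf ΔT i x ℓ * conj (pathGain Δf ΔT j x ℓ) =
      √(x.1 ℓ) ^ 2 * cexp (-(I * ↑(steeringPhase Δf ΔT i x ℓ - steeringPhase Δf ΔT j x ℓ))) := by
  rw [pathGain, pathGain, map_mul, conj_ofReal, ← cexp_neg_I_mul_mul_conj]
  ring

end Channel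

end RandomPhaseModel

theorem stmt_9_general {Ω Z : Type*} [MeasurableSpace Ω] [MeasurableSpace Z]
    (μ : Measure Ω) [IsProbabilityMeasure μ]
    (L MSC MSN MR MT : ℕ) (Δf ΔT : ℝ)
    (p τ ν θR θT β : Fin L → Ω → ℝ)
    (hpmeas : ∀ ℓ, Measurable (p ℓ)) (hτmeas : ∀ ℓ, Measurable (τ ℓ))
    (hνmeas : ∀ ℓ, Measurable (ν ℓ)) (hθRmeas : ∀ ℓ, Measurable (θR ℓ))
    (hθTmeas : ∀ ℓ, Measurable (θT ℓ)) (hβmeas : ∀ ℓ, Measurable (β ℓ))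
    (z : Ω → Z) (hz : Measurable z)
    -- the collected channel parameters Ξ
    (Ξ : Ω → (Fin L → ℝ) × (Fin L → ℝ) × (Fin L → ℝ) × (Fin L → ℝ) × (Fin L → ℝ))
    (hΞ : ∀ ω, Ξ ω =
      (fun i => p i ω, fun i => τ i ω, fun i => ν i ω, fun i => θR i ω, fun i => θT i ω))
    -- conditioned on (z, Ξ), the phases β_ℓ are i.i.d. uniform on [0, 2π]
    (hβ : ∀ᵐ ω ∂μ,
      condDistrib (fun ω' (i : Fin L) => β i ω') (fun ω' => (z ω', Ξ ω')) μ (z ω, Ξ ω) =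
        Measure.pi (fun _ : Fin L => uniformIcc))
    -- the channel tensor
    (H : Ω → Fin MSC × Fin MSN × Fin MR × Fin MT → ℂ)
    (hH : ∀ ω i, H ω i = ∑ ℓ : Fin L,
      (Real.sqrt (p ℓ ω) : ℂ) * Complex.exp (-(Complex.I * (β ℓ ω : ℂ))) *
        Complex.exp (-(Complex.I * ((2 * Real.pi * Δf * (i.1 : ℕ) * τ ℓ ω : ℝ) : ℂ))) *
        Complex.exp (-(Complex.I * ((2 * Real.pi * ΔT * (i.2.1 : ℕ) * ν ℓ ω : ℝ) : ℂ))) *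
        Complex.exp (-(Complex.I * ((Real.pi * (i.2.2.1 : ℕ) * Real.sin (θR ℓ ω) : ℝ) : ℂ))) *
        Complex.exp (-(Complex.I * ((Real.pi * (i.2.2.2 : ℕ) * Real.sin (θT ℓ ω) : ℝ) : ℂ))))
    (hint : ∀ i, Integrable (fun ω => H ω i) μ)
    (hint2 : ∀ i j, Integrable (fun ω => H ω i * (starRingEnd ℂ) (H ω j)) μ) :
    -- E[H | z] = 0
    (∀ i, μ[(fun ω => H ω i) | MeasurableSpace.comap z inferInstance] =ᵐ[μ] 0) ∧
    -- E[H Hᴴ | z] is block-Toeplitz at all four levels: entries depend only on the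
    -- four index differences
    (∀ i j i' j' : Fin MSC × Fin MSN × Fin MR × Fin MT,
      ((i.1 : ℕ) : ℤ) - ((j.1 : ℕ) : ℤ) = ((i'.1 : ℕ) : ℤ) - ((j'.1 : ℕ) : ℤ) →
      ((i.2.1 : ℕ) : ℤ) - ((j.2.1 : ℕ) : ℤ) = ((i'.2.1 : ℕ) : ℤ) - ((j'.2.1 : ℕ) : ℤ) →
      ((i.2.2.1 : ℕ) : ℤ) - ((j.2.2.1 : ℕ) : ℤ) = ((i'.2.2.1 : ℕ) : ℤ) - ((j'.2.2.1 : ℕ) : ℤ) →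
      ((i.2.2.2 : ℕ) : ℤ) - ((j.2.2.2 : ℕ) : ℤ) = ((i'.2.2.2 : ℕ) : ℤ) - ((j'.2.2.2 : ℕ) : ℤ) →
      μ[(fun ω => H ω i * (starRingEnd ℂ) (H ω j)) | MeasurableSpace.comap z inferInstance]
        =ᵐ[μ]
      μ[(fun ω => H ω i' * (starRingEnd ℂ) (H ω j')) |
        MeasurableSpace.comap z inferInstance]) := by
  have hΞmeas : Measurable Ξ := by
    rw [funext hΞ]
    fun_prop
  set X : Ω → Z × PathParams L := fun ω => (z ω, Ξ ω) with hX_def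
  have hX : Measurable X := hz.prodMk hΞmeas
  have hY : AEMeasurable (fun ω ℓ => β ℓ ω) μ := (measurable_pi_lambda _ hβmeas).aemeasurable
  have hzX : MeasurableSpace.comap z inferInstance ≤ MeasurableSpace.comap X inferInstance := by
    rw [show z = Prod.fst ∘ X from rfl, ← MeasurableSpace.comap_comp]
    exact MeasurableSpace.comap_mono measurable_fst.comap_le
  have hgain : ∀ i : Fin MSC × Fin MSN × Fin MR × Fin MT,
      Measurable fun x : Z × PathParams L => pathGain Δf ΔT i x.2 := fun i =>
    (measurable_pathGain Δf ΔT i).comp measurable_snd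
  have hH_eq : ∀ ω i, H ω i = phaseSum (pathGain Δf ΔT i (X ω).2) fun ℓ => β ℓ ω := by
    intro ω i
    simp only [hH, hX_def, hΞ, phaseSum, pathGain, steeringPhase]
    refine Finset.sum_congr rfl fun ℓ _ => ?_
    push_cast
    simp only [neg_add, mul_add, Complex.exp_add]
    ring
  have hcov : ∀ a b,
      μ[fun ω => H ω a * starRingEnd ℂ (H ω b) | MeasurableSpace.comap X inferInstance] =ᵐ[μ]
        fun ω => ∑ ℓ, pathGain Δf ΔT a (X ω).2 ℓ * starRingEnd ℂ (pathGain Δf ΔT b (X ω).2 ℓ) := by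
    intro a b
    simp_rw [hH_eq] at hint2 ⊢
    exact condExp_phaseSum_mul_conj_ae_eq (C := fun x => pathGain Δf ΔT a x.2)
      (D := fun x => pathGain Δf ΔT b x.2) hX hY hβ (hgain a) (hgain b) (hint2 a b)
  refine ⟨fun i => ?_, fun i j i' j' h₁ h₂ h₃ h₄ => ?_⟩
  · have hmean : μ[fun ω => H ω i | MeasurableSpace.comap X inferInstance] =ᵐ[μ] 0 := by
      simp_rw [hH_eq] at hint ⊢
      exact condExp_phaseSum_ae_eq_zero (C := fun x => pathGain Δf ΔT i x.2) hX hY hβ (hgain i)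
        (hint i)
    rw [← condExp_zero]
    exact condExp_ae_eq_of_condExp_ae_eq_of_le hzX hX.comap_le (by rwa [condExp_zero])
  · refine condExp_ae_eq_of_condExp_ae_eq_of_le hzX hX.comap_le ((hcov i j).trans ?_)
    simp_rw [pathGain_mul_conj, steeringPhase_sub_steeringPhase h₁ h₂ h₃ h₄, ← pathGain_mul_conj]
    exact (hcov i' j').symm

/-- **Theorem 1.** For the generic channel
`H = Σ_ℓ √p_ℓ e^{-jβ_ℓ} (a_f(τ_ℓ) ⊗ a_t(ν_ℓ) ⊗ a_R(θ_ℓ^R) ⊗ a_T(θ_ℓ^T))`, if, conditioned on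
the side information `z` and the parameters `Ξ = {p_ℓ, τ_ℓ, ν_ℓ, θ_ℓ^R, θ_ℓ^T}`, the phases
`β_ℓ` are i.i.d. uniform on `[0, 2π]`, then `E[H | z] = 0` and `E[H Hᴴ | z]` is a four-fold
block-Toeplitz matrix (i.e., lies in `T_{M_SC} ⊗ T_{M_SN} ⊗ T_{M_R} ⊗ T_{M_T}`): its entries
depend only on the four index differences. -/
theorem stmt_9 {Ω Z : Type*} [MeasurableSpace Ω] [MeasurableSpace Z]
    (μ : Measure Ω) [IsProbabilityMeasure μ]
    (L MSC MSN MR MT : ℕ) (Δf ΔT : ℝ) (hΔf : 0 < Δf) (hΔT : 0 < ΔT)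
    (p τ ν θR θT β : Fin L → Ω → ℝ)
    (hp : ∀ ℓ ω, 0 ≤ p ℓ ω)
    (hpmeas : ∀ ℓ, Measurable (p ℓ)) (hτmeas : ∀ ℓ, Measurable (τ ℓ))
    (hνmeas : ∀ ℓ, Measurable (ν ℓ)) (hθRmeas : ∀ ℓ, Measurable (θR ℓ))
    (hθTmeas : ∀ ℓ, Measurable (θT ℓ)) (hβmeas : ∀ ℓ, Measurable (β ℓ))
    (z : Ω → Z) (hz : Measurable z)
    -- the collected channel parameters Ξ
    (Ξ : Ω → (Fin L → ℝ) × (Fin L → ℝ) × (Fin L → ℝ) × (Fin L → ℝ) × (Fin L → ℝ))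
    (hΞ : ∀ ω, Ξ ω =
      (fun i => p i ω, fun i => τ i ω, fun i => ν i ω, fun i => θR i ω, fun i => θT i ω))
    -- conditioned on (z, Ξ), the phases β_ℓ are i.i.d. uniform on [0, 2π]
    (hβ : ∀ᵐ ω ∂μ,
      condDistrib (fun ω' (i : Fin L) => β i ω') (fun ω' => (z ω', Ξ ω')) μ (z ω, Ξ ω) =
        Measure.pi (fun _ : Fin L => uniformIcc))
    -- the channel tensor
    (H : Ω → Fin MSC × Fin MSN × Fin MR × Fin MT → ℂ)
    (hH : ∀ ω i, H ω i = ∑ ℓ : Fin L,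
      (Real.sqrt (p ℓ ω) : ℂ) * Complex.exp (-(Complex.I * (β ℓ ω : ℂ))) *
        Complex.exp (-(Complex.I * ((2 * Real.pi * Δf * (i.1 : ℕ) * τ ℓ ω : ℝ) : ℂ))) *
        Complex.exp (-(Complex.I * ((2 * Real.pi * ΔT * (i.2.1 : ℕ) * ν ℓ ω : ℝ) : ℂ))) *
        Complex.exp (-(Complex.I * ((Real.pi * (i.2.2.1 : ℕ) * Real.sin (θR ℓ ω) : ℝ) : ℂ))) *
        Complex.exp (-(Complex.I * ((Real.pi * (i.2.2.2 : ℕ) * Real.sin (θT ℓ ω) : ℝ) : ℂ))))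
    (hint : ∀ i, Integrable (fun ω => H ω i) μ)
    (hint2 : ∀ i j, Integrable (fun ω => H ω i * (starRingEnd ℂ) (H ω j)) μ) :
    -- E[H | z] = 0
    (∀ i, μ[(fun ω => H ω i) | MeasurableSpace.comap z inferInstance] =ᵐ[μ] 0) ∧
    -- E[H Hᴴ | z] is block-Toeplitz at all four levels: entries depend only on the
    -- four index differences
    (∀ i j i' j' : Fin MSC × Fin MSN × Fin MR × Fin MT,
      ((i.1 : ℕ) : ℤ) - ((j.1 : ℕ) : ℤ) = ((i'.1 : ℕ) : ℤ) - ((j'.1 : ℕ) : ℤ) →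
      ((i.2.1 : ℕ) : ℤ) - ((j.2.1 : ℕ) : ℤ) = ((i'.2.1 : ℕ) : ℤ) - ((j'.2.1 : ℕ) : ℤ) →
      ((i.2.2.1 : ℕ) : ℤ) - ((j.2.2.1 : ℕ) : ℤ) = ((i'.2.2.1 : ℕ) : ℤ) - ((j'.2.2.1 : ℕ) : ℤ) →
      ((i.2.2.2 : ℕ) : ℤ) - ((j.2.2.2 : ℕ) : ℤ) = ((i'.2.2.2 : ℕ) : ℤ) - ((j'.2.2.2 : ℕ) : ℤ) →
      μ[(fun ω => H ω i * (starRingEnd ℂ) (H ω j)) | MeasurableSpace.comap z inferInstance]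
        =ᵐ[μ]
      μ[(fun ω => H ω i' * (starRingEnd ℂ) (H ω j')) |
        MeasurableSpace.comap z inferInstance]) :=
  stmt_9_general μ L MSC MSN MR MT Δf ΔT p τ ν θR θT β hpmeas hτmeas hνmeas hθRmeas hθTmeas hβmeas z
    hz Ξ hΞ hβ H hH hint hint2
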